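/- arXiv:1612.05441 — 7 statements merged into one kernel-verified Lean document; each statement's English description precedes it below -/
import Mathlib

section
/- For a finite graph G = (V,E) and a 0-1 labeling x of the edges, the set of edges labeled 1 is a multicut of G (i.e., the set of edges straddling distinct blocks of some partition of V) if and only if for every cycle C in G and every edge e in C, x_e ≤ ∑_{e' ∈ C \ {e}} x_{e'}. -/
/-- `M` is a multicut of `G`: `M` consists of edges of `G` and there is a
partition of the vertices (encoded by a labeling `f`) such that an edge of `G`
belongs to `M` iff its endpoints lie in distinct blocks. -/
def IsMulticut {V : Type*} (G : SimpleGraph V) (M : Finset (Sym2 V)) : Prop :=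
  ↑M ⊆ G.edgeSet ∧ ∃ f : V → ℕ, ∀ v w : V, G.Adj v w → (s(v, w) ∈ M ↔ f v ≠ f w)

/-!
For a 0-1 labeling, a cycle inequality fails exactly when some cycle carries a single edge
labeled 1. A partition never cuts a cycle in a single edge: the rest of the cycle joins the
endpoints of that edge inside one block. Conversely, if no cycle carries a single 1-edge, take
as blocks the connected components of the graph of 0-edges: a 1-edge inside one component would
close a cycle with a path of 0-edges.
-/

theorem Finset.sum_erase_lt_iff_of_zero_or_one {α : Type*} [DecidableEq α] {x : α → ℕ}
    (hx : ∀ a, x a = 0 ∨ x a = 1) (s : Finset α) (a : α) :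
    ∑ b ∈ s.erase a, x b < x a ↔ x a = 1 ∧ ∀ b ∈ s, b ≠ a → x b = 0 := by
  have hsum : ∑ b ∈ s.erase a, x b = 0 ↔ ∀ b ∈ s, b ≠ a → x b = 0 := by
    simp only [sum_eq_zero_iff, mem_erase]
    exact ⟨fun h b hb hba => h b ⟨hba, hb⟩, fun h b hb => h b hb.2 hb.1⟩
  rw [← hsum]
  rcases hx a with h | h <;> rw [h] <;> omega

namespace SimpleGraph

variable {V α : Type*} {G : SimpleGraph V} {M : Set (Sym2 V)} {f : V → α}

namespace Walk

theorem apply_eq_of_forall_edges_notMem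
    (hf : ∀ v w, G.Adj v w → s(v, w) ∉ M → f v = f w) :
    ∀ {u v : V} (p : G.Walk u v), (∀ e ∈ p.edges, e ∉ M) → f u = f v
  | _, _, .nil, _ => rfl
  | _, _, .cons h p, hp =>
    (hf _ _ h (hp _ (by simp))).trans
      (apply_eq_of_forall_edges_notMem hf p fun e he => hp e (by simp [he]))

theorem apply_ne_of_edges_inter_eq_singleton
    (hf : ∀ v w, G.Adj v w → (s(v, w) ∈ M ↔ f v ≠ f w)) {e : Sym2 V} (heM : e ∈ M) :
    ∀ {u v : V} (p : G.Walk u v), p.edges.Nodup → e ∈ p.edges →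
      (∀ e' ∈ p.edges, e' ≠ e → e' ∉ M) → f u ≠ f v
  | _, _, .nil, _, he, _ => by simp at he
  | u, _, .cons (v := w) h p, hp, he, hM => by
    rw [edges_cons, List.nodup_cons] at hp
    rw [edges_cons, List.mem_cons] at he
    have hrest : ∀ e' ∈ p.edges, e' ≠ e → e' ∉ M := fun e' he' => hM e' (by simp [he'])
    rcases he with rfl | he
    · have hpath := apply_eq_of_forall_edges_notMem
        (fun v w h hvw => not_ne_iff.mp (mt (hf v w h).mpr hvw)) p
        fun e' he' => hrest e' he' (by rintro rfl; exact hp.1 he')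
      rw [← hpath]
      exact (hf _ _ h).mp heM
    · have hne : s(u, w) ≠ e := by rintro rfl; exact hp.1 he
      rw [not_ne_iff.mp (mt (hf u w h).mpr (hM _ (by simp) hne))]
      exact apply_ne_of_edges_inter_eq_singleton hf heM p hp.2 he hrest

end Walk

theorem exists_isCycle_of_reachable_deleteEdges {v w : V} (h : G.Adj v w) (hM : s(v, w) ∈ M)
    (hr : (G.deleteEdges M).Reachable w v) :
    ∃ c : G.Walk v v, c.IsCycle ∧ s(v, w) ∈ c.edges ∧ ∀ e ∈ c.edges, e ≠ s(v, w) → e ∉ M := by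
  classical
  obtain ⟨p⟩ := hr
  let q := p.toPath.val.mapLe (G.deleteEdges_le M)
  have hq : ∀ e ∈ q.edges, e ∉ M := by
    intro e he
    rw [Walk.edges_mapLe_eq_edges] at he
    have heG := p.toPath.val.edges_subset_edgeSet he
    rw [edgeSet_deleteEdges] at heG
    exact heG.2
  refine ⟨.cons h q, ?_, by simp, fun e he hne => ?_⟩
  · exact (Walk.cons_isCycle_iff q h).mpr
      ⟨(Walk.isPath_mapLe _).mpr p.toPath.prop, fun he => hq _ he hM⟩
  · rw [Walk.edges_cons, List.mem_cons] at he
    exact hq e (he.resolve_left hne)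

theorem isMulticut_of_forall_not_reachable [Countable V] {M : Finset (Sym2 V)}
    (hM : ↑M ⊆ G.edgeSet)
    (h : ∀ v w, G.Adj v w → s(v, w) ∈ M → ¬ (G.deleteEdges M).Reachable v w) :
    IsMulticut G M := by
  have : Countable (G.deleteEdges M).ConnectedComponent := Quot.mk_surjective.countable
  obtain ⟨g, hg⟩ := Countable.exists_injective_nat (G.deleteEdges M).ConnectedComponent
  refine ⟨hM, g ∘ (G.deleteEdges M).connectedComponentMk, fun v w hvw => ?_⟩
  rw [Function.comp_apply, Function.comp_apply, hg.ne_iff, ne_eq, ConnectedComponent.eq]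
  refine ⟨h v w hvw, fun hr => by_contra fun hvwM => hr (Adj.reachable ?_)⟩
  simpa [hvw] using hvwM

end SimpleGraph

/-- for a 0-1 edge labeling `x`, the set of edges labeled `1` is a
multicut of `G` iff every cycle inequality holds. -/
theorem multicut_iff_cycle_inequalities {V : Type*} [Fintype V] [DecidableEq V]
    (G : SimpleGraph V) [DecidableRel G.Adj]
    (x : Sym2 V → ℕ) (hx : ∀ e, x e = 0 ∨ x e = 1) :
    IsMulticut G (G.edgeFinset.filter (fun e => x e = 1)) ↔
      ∀ (u : V) (c : G.Walk u u), c.IsCycle → ∀ e ∈ c.edges,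
        x e ≤ ∑ e' ∈ c.edges.toFinset.erase e, x e' := by
  set M := G.edgeFinset.filter (fun e => x e = 1)
  have hmemM {e : Sym2 V} (he : e ∈ G.edgeSet) : e ∈ M ↔ x e = 1 := by simp [M, he]
  constructor
  · rintro ⟨-, f, hf⟩ u c hc e he
    by_contra! hlt
    obtain ⟨hxe, hrest⟩ := (Finset.sum_erase_lt_iff_of_zero_or_one hx _ e).mp hlt
    refine c.apply_ne_of_edges_inter_eq_singleton (M := ↑M) hf ?_ hc.edges_nodup he ?_ rfl
    · exact (hmemM (c.edges_subset_edgeSet he)).mpr hxe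
    · intro e' he' hne
      rw [Finset.mem_coe, hmemM (c.edges_subset_edgeSet he'),
        hrest e' (List.mem_toFinset.mpr he') hne]
      exact zero_ne_one
  · intro hcyc
    have hsub : ↑M ⊆ G.edgeSet := fun e he => G.mem_edgeFinset.mp (Finset.mem_filter.mp he).1
    refine SimpleGraph.isMulticut_of_forall_not_reachable hsub fun v w hvw hvwM hr => ?_
    obtain ⟨c, hc, he, hrest⟩ :=
      SimpleGraph.exists_isCycle_of_reachable_deleteEdges hvw hvwM hr.symm
    refine (hcyc v c hc _ he).not_gt
      ((Finset.sum_erase_lt_iff_of_zero_or_one hx _ _).mpr ⟨?_, fun e' he' hne => ?_⟩)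
    · exact (hmemM (c.edges_subset_edgeSet he)).mp hvwM
    · rw [List.mem_toFinset] at he'
      have he'M := hrest e' he' hne
      rw [Finset.mem_coe, hmemM (c.edges_subset_edgeSet he')] at he'M
      exact (hx e').resolve_right he'M
end

section
/- Let G = (V,E) be a graph, k an odd natural number, and consider a k-wheel in G with center u and cycle nodes v_1,…,v_k (with v_{k+1} := v_1), so that all edges v_i v_{i+1} and u v_i belong to E. Then for every multicut M of G, its characteristic vector x ∈ {0,1}^E satisfies ∑_{i=1}^k x_{v_i v_{i+1}} − ∑_{i=1}^k x_{u v_i} ≤ ⌊k/2⌋. -/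
/-- `M` is a multicut of `G` (set version). -/
def IsMulticutSet {V : Type*} (G : SimpleGraph V) (M : Set (Sym2 V)) : Prop :=
  M ⊆ G.edgeSet ∧ ∃ f : V → ℕ, ∀ v w : V, G.Adj v w → (s(v, w) ∈ M ↔ f v ≠ f w)

/-- odd wheel inequality.  For an odd `k`-wheel with center `u` and
cycle nodes `v 0, …, v (k-1)` (cyclically indexed), the characteristic vector `x`
of any multicut `M` satisfies `∑ rim − ∑ spokes ≤ ⌊k/2⌋`. -/
theorem odd_wheel_inequality {V : Type*} (G : SimpleGraph V) (k : ℕ) [NeZero k]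
    (hk : Odd k) (u : V) (v : ZMod k → V)
    (hspoke : ∀ i, G.Adj u (v i)) (hrim : ∀ i, G.Adj (v i) (v (i + 1)))
    (M : Set (Sym2 V)) (hM : IsMulticutSet G M)
    (x : Sym2 V → ℤ) (hx : ∀ e, (e ∈ M → x e = 1) ∧ (e ∉ M → x e = 0)) :
    ∑ i : ZMod k, x s(v i, v (i + 1)) - ∑ i : ZMod k, x s(u, v i) ≤ ((k / 2 : ℕ) : ℤ) := by
  obtain ⟨hMsub, f, hf⟩ := hM
  set a : ZMod k → ℤ := fun i => x s(v i, v (i + 1)) with ha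
  set b : ZMod k → ℤ := fun i => x s(u, v i) with hb
  have hb01 : ∀ i, b i = 0 ∨ b i = 1 := by
    intro i
    by_cases h : s(u, v i) ∈ M
    · exact Or.inr ((hx _).1 h)
    · exact Or.inl ((hx _).2 h)
  have key : ∀ i, 2 * a i ≤ 1 + b i + b (i + 1) := by
    intro i
    by_cases h : s(v i, v (i + 1)) ∈ M
    · have ha1 : a i = 1 := (hx _).1 h
      have hne : f (v i) ≠ f (v (i + 1)) := (hf _ _ (hrim i)).1 h
      rcases hb01 i with h0 | h1
      · have hnm : s(u, v i) ∉ M := by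
          intro hmem
          have := (hx s(u, v i)).1 hmem
          simp only [hb] at h0
          omega
        have hfu : f u = f (v i) := by
          by_contra hne'
          exact hnm ((hf _ _ (hspoke i)).2 hne')
        have hne2 : f u ≠ f (v (i + 1)) := by rw [hfu]; exact hne
        have hmem : s(u, v (i + 1)) ∈ M := (hf _ _ (hspoke (i + 1))).2 hne2
        have hb1 : b (i + 1) = 1 := (hx _).1 hmem
        omega
      · rcases hb01 (i + 1) with h0' | h1' <;> omega
    · have ha0 : a i = 0 := (hx _).2 h
      rcases hb01 i with h0 | h1 <;> rcases hb01 (i + 1) with h0' | h1' <;> omega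
  have hsum : ∑ i : ZMod k, 2 * a i ≤ ∑ i : ZMod k, (1 + b i + b (i + 1)) :=
    Finset.sum_le_sum fun i _ => key i
  have hshift : ∑ i : ZMod k, b (i + 1) = ∑ i : ZMod k, b i :=
    Fintype.sum_equiv (Equiv.addRight 1) _ _ (fun i => rfl)
  have hcard : (Finset.univ : Finset (ZMod k)).card = k := by
    simp [ZMod.card]
  have hrhs : ∑ i : ZMod k, (1 + b i + b (i + 1)) =
      (k : ℤ) + 2 * ∑ i : ZMod k, b i := by
    rw [Finset.sum_add_distrib, Finset.sum_add_distrib, hshift, Finset.sum_const, hcard]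
    ring
  have hlhs : ∑ i : ZMod k, 2 * a i = 2 * ∑ i : ZMod k, a i := by
    rw [Finset.mul_sum]
  obtain ⟨m, hm⟩ := hk
  have hk2 : k / 2 = m := by omega
  have hmk : (k : ℤ) = 2 * m + 1 := by exact_mod_cast congrArg Nat.cast hm
  rw [hk2]
  rw [hlhs, hrhs] at hsum
  have : 2 * ∑ i : ZMod k, a i ≤ 2 * (m : ℤ) + 1 + 2 * ∑ i : ZMod k, b i := by
    rw [hmk] at hsum; linarith
  linarith
end

section
/- Let C be a cycle in a graph with edges e_1,…,e_k and edge costs θ satisfying θ_{e_1} ≤ −ε and θ_{e_i} ≥ ε for all i ≥ 2, where ε ≥ 0. Then the minimum over all 0-1 labelings x of the edges of C satisfying the cycle inequalities (x_{e_j} ≤ ∑_{i ≠ j} x_{e_i} for all j) of ∑_i θ_{e_i} x_{e_i} is at least ε plus the unconstrained minimum min_{x ∈ {0,1}^k} ∑_i θ_{e_i} x_{e_i}. -/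
/-- if a cycle has edge costs `θ` with `θ e₁ ≤ -ε` and `θ eᵢ ≥ ε`
for `i > 1`, then any 0-1 labeling satisfying the cycle inequalities has cost
at least `ε` plus the unconstrained minimum `∑ min 0 (θ i)`. -/
theorem cycle_subproblem_bound_increase (k : ℕ) [NeZero k] (θ : Fin k → ℝ)
    (ε : ℝ) (hε : 0 ≤ ε) (h1 : θ 0 ≤ -ε) (h2 : ∀ i, i ≠ 0 → ε ≤ θ i)
    (x : Fin k → Bool)
    (hcyc : ∀ j, (if x j then (1 : ℝ) else 0) ≤
      ∑ i ∈ Finset.univ.erase j, (if x i then (1 : ℝ) else 0)) :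
    ε + ∑ i, min 0 (θ i) ≤ ∑ i, (if x i then θ i else 0) := by
  have hmin : ∑ i, min 0 (θ i) = θ 0 := by
    rw [Finset.sum_eq_single 0]
    · exact min_eq_right (h1.trans (by linarith))
    · intro i _ hi
      exact min_eq_left (le_trans hε (h2 i hi))
    · simp
  rw [hmin]
  have hnonneg : ∀ i ∈ Finset.univ.erase (0 : Fin k),
      (0 : ℝ) ≤ (if x i then θ i else 0) := by
    intro i hi
    rcases Finset.mem_erase.1 hi with ⟨hi0, _⟩
    split
    · exact le_trans hε (h2 i hi0)
    · exact le_refl 0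
  rw [← Finset.add_sum_erase _ _ (Finset.mem_univ (0 : Fin k))]
  cases hx0 : x 0 with
  | false =>
    simp only [hx0, if_neg Bool.false_ne_true, zero_add]
    have : (0:ℝ) ≤ ∑ i ∈ Finset.univ.erase (0 : Fin k), (if x i then θ i else 0) :=
      Finset.sum_nonneg hnonneg
    linarith
  | true =>
    have h := hcyc 0
    rw [hx0, if_pos rfl] at h
    -- there exists i ≠ 0 with x i = true
    have hex : ∃ i ∈ Finset.univ.erase (0 : Fin k), x i = true := by
      by_contra hc
      push_neg at hc
      have : ∑ i ∈ Finset.univ.erase (0 : Fin k), (if x i then (1:ℝ) else 0) = 0 := by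
        apply Finset.sum_eq_zero
        intro i hi
        simp [hc i hi]
      rw [this] at h
      linarith
    rcases hex with ⟨i, hi, hxi⟩
    have hle : θ i ≤ ∑ j ∈ Finset.univ.erase (0 : Fin k), (if x j then θ j else 0) := by
      have := Finset.single_le_sum hnonneg hi
      rwa [if_pos hxi] at this
    have hεθ : ε ≤ θ i := h2 i (Finset.mem_erase.1 hi).1
    simp only [if_pos rfl, if_true]
    linarith
end

section
/- Suppose θ maximizes the dual lower bound L(θ) over all reparametrizations of the minimum cost multicut LP, and the relaxation is tight, i.e., L(θ) equals the minimum of ⟨θ, x⟩ over characteristic vectors x of multicuts of G. If x̂ is the characteristic vector of an optimal multicut, then θ_e ≤ 0 whenever x̂_e = 1 and θ_e ≥ 0 whenever x̂_e = 0. -/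
/-- complementary slackness.  If the dual lower bound
`L(θ) = ∑ min(0, θ_e)` is tight, i.e. equals the cost of an optimal multicut
`M`, then `θ_e ≤ 0` for cut edges and `θ_e ≥ 0` for uncut edges. -/
theorem multicut_complementary_slackness {V : Type*} [Fintype V] [DecidableEq V]
    (G : SimpleGraph V) [DecidableRel G.Adj] (θ : Sym2 V → ℝ)
    (M : Finset (Sym2 V)) (hM : IsMulticut G M)
    (hopt : ∀ M', IsMulticut G M' → ∑ e ∈ M, θ e ≤ ∑ e ∈ M', θ e)
    (htight : ∑ e ∈ G.edgeFinset, min 0 (θ e) = ∑ e ∈ M, θ e) :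
    ∀ e ∈ G.edgeFinset, (e ∈ M → θ e ≤ 0) ∧ (e ∉ M → 0 ≤ θ e) := by
  have hMsub : M ⊆ G.edgeFinset := fun e he =>
    SimpleGraph.mem_edgeFinset.mpr (hM.1 he)
  set f : Sym2 V → ℝ := fun e => if e ∈ M then min 0 (θ e) - θ e else min 0 (θ e) with hf
  have hfle : ∀ e, f e ≤ 0 := by
    intro e
    simp only [hf]
    split
    · linarith [min_le_right 0 (θ e)]
    · exact min_le_left 0 (θ e)
  have hsplit : ∑ e ∈ M, θ e = ∑ e ∈ G.edgeFinset, (if e ∈ M then θ e else 0) := by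
    rw [Finset.sum_ite_mem, Finset.inter_eq_right.mpr hMsub]
  have hsum : ∑ e ∈ G.edgeFinset, f e = 0 := by
    have : ∑ e ∈ G.edgeFinset, f e
        = ∑ e ∈ G.edgeFinset, min 0 (θ e) - ∑ e ∈ G.edgeFinset, (if e ∈ M then θ e else 0) := by
      rw [← Finset.sum_sub_distrib]
      refine Finset.sum_congr rfl fun e _ => ?_
      simp only [hf]
      split <;> simp
    rw [this, htight, hsplit, sub_self]
  have hzero : ∀ e ∈ G.edgeFinset, f e = 0 := by
    intro e he
    by_contra hne
    have hlt : f e < 0 := lt_of_le_of_ne (hfle e) hne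
    have : ∑ x ∈ G.edgeFinset, f x < 0 := by
      calc ∑ x ∈ G.edgeFinset, f x ≤ f e := by
            rw [← Finset.add_sum_erase _ f he]
            have := Finset.sum_nonpos (s := (G.edgeFinset).erase e) (fun x _ => hfle x)
            linarith
        _ < 0 := hlt
    linarith [hsum]
  intro e he
  have h0 := hzero e he
  constructor
  · intro hmem
    simp only [hf, if_pos hmem] at h0
    have : min 0 (θ e) = θ e := by linarith
    linarith [min_le_left 0 (θ e)]
  · intro hnm
    simp only [hf, if_neg hnm] at h0
    rcases min_eq_iff.mp h0 with ⟨_, h⟩ | ⟨h, _⟩ <;> linarith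
end

section
/- If C = {e_1,…,e_k} is a cycle in G and T_2,…,T_{k-1} are the triangles v_1 v_i v_{i+1} of a fan triangulation of C from vertex v_1, then the cycle inequalities for the triangles (i.e., for each triangle, the three inequalities saying no exactly-one edge is cut) imply the cycle inequality x_{e_j} ≤ ∑_{i≠j} x_{e_i} for the whole cycle C, for any x ∈ [0,1] on the edges of C and chords. -/
section Aux

variable (k : ℕ) [NeZero k] (d : ZMod k → ZMod k → ℝ)

lemma zmod_sum_eq_range (f : ZMod k → ℝ) :
    ∑ i : ZMod k, f i = ∑ n ∈ Finset.range k, f ↑n :=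
  Finset.sum_nbij' (fun i => i.val) (fun n => (↑n : ZMod k))
    (fun a _ => Finset.mem_range.2 (ZMod.val_lt a)) (fun a _ => Finset.mem_univ _)
    (fun a _ => ZMod.natCast_rightInverse a)
    (fun a ha => ZMod.val_cast_of_lt (Finset.mem_range.1 ha))
    (fun a _ => by rw [ZMod.natCast_rightInverse a])

lemma natCast_ne_zero' {a : ℕ} (h : a < k) (h2 : a ≠ 0) : (↑a : ZMod k) ≠ 0 := by
  rw [Ne, ZMod.natCast_eq_zero_iff]
  exact fun hd => h2 (Nat.eq_zero_of_dvd_of_lt hd h)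

variable (htri : ∀ i : ZMod k, i ≠ 0 → i + 1 ≠ 0 →
      d i (i + 1) ≤ d 0 i + d 0 (i + 1) ∧
      d 0 i ≤ d 0 (i + 1) + d i (i + 1) ∧
      d 0 (i + 1) ≤ d 0 i + d i (i + 1))

include htri

/-- chord `0–n` is at most chord `0–1` plus the edges between. -/
lemma chord_left (n : ℕ) (h1 : 1 ≤ n) (h2 : n ≤ k - 1) :
    d 0 ↑n ≤ d 0 ↑(1 : ℕ) + ∑ i ∈ Finset.Ico 1 n, d ↑i (↑i + 1) := by
  induction n, h1 using Nat.le_induction with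
  | base => simp
  | succ n hn ih =>
    have hk1 : n + 1 < k := by omega
    have h0 : (↑n : ZMod k) ≠ 0 := natCast_ne_zero' k (by omega) (by omega)
    have hcast : ((n + 1 : ℕ) : ZMod k) = ↑n + 1 := by push_cast; ring
    have h0' : (↑n : ZMod k) + 1 ≠ 0 := by
      rw [← hcast]; exact natCast_ne_zero' k hk1 (by omega)
    have t := (htri ↑n h0 h0').2.2
    have ihh := ih (by omega)
    rw [Finset.sum_Ico_succ_top (by omega), hcast]
    linarith
/-- chord `0–n` is at most chord `0–(k-1)` plus the edges between. -/
lemma chord_right (m : ℕ) : ∀ n, n + m = k - 1 → 1 ≤ n →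
    d 0 ↑n ≤ d 0 ↑(k - 1) + ∑ i ∈ Finset.Ico n (k - 1), d ↑i (↑i + 1) := by
  induction m with
  | zero => intro n hn _; subst hn; simp
  | succ m ih =>
    intro n hn h1
    have h0 : (↑n : ZMod k) ≠ 0 := natCast_ne_zero' k (by omega) (by omega)
    have hcast : ((n + 1 : ℕ) : ZMod k) = ↑n + 1 := by push_cast; ring
    have h0' : (↑n : ZMod k) + 1 ≠ 0 := by
      rw [← hcast]; exact natCast_ne_zero' k (by omega) (by omega)
    have t := (htri ↑n h0 h0').2.1
    have ihh := ih (n + 1) (by omega) (by omega)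
    rw [hcast] at ihh
    rw [Finset.sum_eq_sum_Ico_succ_bot (by omega)]
    linarith

end Aux

/-- the triangle inequalities of a fan triangulation of a cycle
(vertices `ZMod k`, fan from vertex `0`) imply the cycle inequalities for the
whole cycle, for any `[0,1]`-valued labeling `d` of edges and chords. -/
theorem fan_triangulation_implies_cycle_inequality (k : ℕ) [NeZero k]
    (hk : 3 ≤ k) (d : ZMod k → ZMod k → ℝ)
    (hsymm : ∀ i j, d i j = d j i)
    (h0 : ∀ i j, 0 ≤ d i j) (h1 : ∀ i j, d i j ≤ 1)
    (htri : ∀ i : ZMod k, i ≠ 0 → i + 1 ≠ 0 →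
      d i (i + 1) ≤ d 0 i + d 0 (i + 1) ∧
      d 0 i ≤ d 0 (i + 1) + d i (i + 1) ∧
      d 0 (i + 1) ≤ d 0 i + d i (i + 1)) :
    ∀ j : ZMod k, d j (j + 1) ≤ ∑ i ∈ Finset.univ.erase j, d i (i + 1) := by
  intro j
  have hsplit := Finset.add_sum_erase Finset.univ (fun i => d i (i + 1)) (Finset.mem_univ j)
  suffices h : 2 * d j (j + 1) ≤ ∑ i : ZMod k, d i (i + 1) by linarith
  have hsum : ∑ i : ZMod k, d i (i + 1) = ∑ n ∈ Finset.range k, d ↑n (↑n + 1) :=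
    zmod_sum_eq_range k _
  obtain ⟨m, hmlt, rfl⟩ : ∃ m, m < k ∧ (↑m : ZMod k) = j :=
    ⟨j.val, ZMod.val_lt j, ZMod.natCast_rightInverse j⟩
  rw [hsum]
  have hlast : d ((k - 1 : ℕ) : ZMod k) (((k - 1 : ℕ) : ZMod k) + 1) = d 0 ↑(k - 1) := by
    have hz : ((k - 1 : ℕ) : ZMod k) + 1 = 0 := by
      have : ((k - 1 : ℕ) : ZMod k) + 1 = ((k - 1 + 1 : ℕ) : ZMod k) := by push_cast; ring
      rw [this, Nat.sub_add_cancel (by omega), ZMod.natCast_self]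
    rw [hz, hsymm]
  have hfirst : d ((0 : ℕ) : ZMod k) (((0 : ℕ) : ZMod k) + 1) = d 0 ↑(1 : ℕ) := by norm_num
  have hsplit2 : ∑ n ∈ Finset.range k, d ↑n (↑n + 1)
      = d 0 ↑(1 : ℕ) + ∑ i ∈ Finset.Ico 1 (k - 1), d ↑i (↑i + 1) + d 0 ↑(k - 1) := by
    rw [Finset.range_eq_Ico, Finset.sum_eq_sum_Ico_succ_bot (by omega),
      show Finset.Ico (0 + 1) k = Finset.Ico 1 ((k - 1) + 1) from by
        rw [Nat.sub_add_cancel (by omega)],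
      Finset.sum_Ico_succ_top (by omega), hfirst, hlast]
    ring
  rw [hsplit2]
  have hEnn : (0:ℝ) ≤ ∑ i ∈ Finset.Ico 1 (k - 1), d ↑i (↑i + 1) :=
    Finset.sum_nonneg fun i _ => h0 _ _
  rcases eq_or_ne m 0 with rfl | hm0
  · -- first edge
    have hR := chord_right k d htri (k - 2) 1 (by omega) (by omega)
    rw [hfirst]
    linarith
  rcases eq_or_ne m (k - 1) with rfl | hmk
  · -- last edge
    have hL := chord_left k d htri (k - 1) (by omega) le_rfl
    rw [hlast]
    linarith
  · -- middle edge
    have h0m : (↑m : ZMod k) ≠ 0 := natCast_ne_zero' k hmlt hm0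
    have hcast : ((m + 1 : ℕ) : ZMod k) = ↑m + 1 := by push_cast; ring
    have h0m' : (↑m : ZMod k) + 1 ≠ 0 := by
      rw [← hcast]; exact natCast_ne_zero' k (by omega) (by omega)
    have t := (htri ↑m h0m h0m').1
    have hL := chord_left k d htri m (by omega) (by omega)
    have hR := chord_right k d htri (k - 1 - (m + 1)) (m + 1) (by omega) (by omega)
    rw [hcast] at hR
    have hmid : ∑ i ∈ Finset.Ico 1 (k - 1), d ↑i (↑i + 1)
        = ∑ i ∈ Finset.Ico 1 m, d ↑i (↑i + 1) + d ↑m (↑m + 1)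
          + ∑ i ∈ Finset.Ico (m + 1) (k - 1), d ↑i (↑i + 1) := by
      rw [← Finset.sum_Ico_consecutive (fun n : ℕ => d ↑n (↑n + 1))
          (show 1 ≤ m by omega) (show m ≤ k - 1 by omega),
        ← Finset.sum_Ico_consecutive (fun n : ℕ => d ↑n (↑n + 1))
          (show m ≤ m + 1 by omega) (show m + 1 ≤ k - 1 by omega)]
      have hone : ∑ i ∈ Finset.Ico m (m + 1), d (↑i : ZMod k) (↑i + 1) = d ↑m (↑m + 1) := by
        simp
      rw [hone]; ring
    rw [hmid]
    linarith
end

section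
/- A subset M ⊆ E of the edges of a finite graph G = (V,E) is a multicut of G if and only if no cycle of G intersects M in exactly one edge. -/
private lemma walk_count_aux {V : Type*} [DecidableEq V] (G : SimpleGraph V)
    (M : Finset (Sym2 V)) (f : V → ℕ)
    (hf : ∀ v w : V, G.Adj v w → (s(v, w) ∈ M ↔ f v ≠ f w)) :
    ∀ {u v : V} (p : G.Walk u v),
      ((p.edges.countP (fun e => decide (e ∈ M)) = 0 → f u = f v) ∧
       (p.edges.countP (fun e => decide (e ∈ M)) = 1 → f u ≠ f v)) := by
  intro u v p
  induction p with
  | nil => simp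
  | @cons a b c h q ih =>
    by_cases hm : s(a, b) ∈ M
    · have hne : f a ≠ f b := (hf a b h).mp hm
      constructor
      · intro h0
        simp [List.countP_cons, hm] at h0
      · intro h1
        simp [List.countP_cons, hm] at h1
        have : f b = f c := ih.1 (List.countP_eq_zero.mpr (by simpa using h1))
        omega
    · have heq : f a = f b := by
        by_contra hne
        exact hm ((hf a b h).mpr hne)
      constructor
      · intro h0
        simp [List.countP_cons, hm] at h0
        rw [heq]; exact ih.1 (List.countP_eq_zero.mpr (by simpa using h0))
      · intro h1
        simp [List.countP_cons, hm] at h1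
        rw [heq]; exact ih.2 h1

/-- a subset `M` of the edges of a finite graph `G` is a multicut
iff no cycle of `G` intersects `M` in exactly one edge. -/
theorem multicut_iff_no_cycle_single_intersection {V : Type*} [Fintype V]
    [DecidableEq V] (G : SimpleGraph V) (M : Finset (Sym2 V))
    (hsub : ↑M ⊆ G.edgeSet) :
    IsMulticut G M ↔
      ∀ (u : V) (c : G.Walk u u), c.IsCycle →
        (c.edges.countP (fun e => decide (e ∈ M))) ≠ 1 := by
  classical
  constructor
  · rintro ⟨-, f, hf⟩ u c hc hcount
    exact (walk_count_aux G M f hf c).2 hcount rfl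
  · intro hcyc
    refine ⟨hsub, ?_⟩
    set G' := G.deleteEdges ↑M with hG'
    haveI : Finite G'.ConnectedComponent :=
      Finite.of_surjective G'.connectedComponentMk (fun c => Quot.exists_rep c)
    haveI := Fintype.ofFinite G'.ConnectedComponent
    refine ⟨fun v => Fintype.equivFin G'.ConnectedComponent (G'.connectedComponentMk v), ?_⟩
    intro v w hvw
    have key : (Fintype.equivFin G'.ConnectedComponent (G'.connectedComponentMk v) : ℕ) =
        (Fintype.equivFin G'.ConnectedComponent (G'.connectedComponentMk w) : ℕ) ↔
        G'.Reachable v w := by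
      rw [← SimpleGraph.ConnectedComponent.eq]
      constructor
      · intro h
        exact (Fintype.equivFin _).injective (Fin.val_injective h)
      · intro h; rw [h]
    constructor
    · intro hmem hfeq
      have hreach : G'.Reachable w v := (key.mp hfeq).symm
      obtain ⟨p⟩ := hreach
      let q := p.toPath
      have hq_edges : ∀ e ∈ (q : G'.Walk w v).edges, e ∈ G.edgeSet := by
        intro e he
        have := (q : G'.Walk w v).edges_subset_edgeSet he
        rw [hG', SimpleGraph.edgeSet_deleteEdges] at this
        exact this.1
      have hq_notM : ∀ e ∈ (q : G'.Walk w v).edges, e ∉ M := by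
        intro e he
        have := (q : G'.Walk w v).edges_subset_edgeSet he
        rw [hG', SimpleGraph.edgeSet_deleteEdges] at this
        exact this.2
      let q' := (q : G'.Walk w v).transfer G hq_edges
      have hq'path : q'.IsPath := q.2.transfer hq_edges
      have hq'edges : q'.edges = (q : G'.Walk w v).edges :=
        SimpleGraph.Walk.edges_transfer _ hq_edges
      have hcycle : (SimpleGraph.Walk.cons hvw q').IsCycle := by
        rw [SimpleGraph.Walk.cons_isCycle_iff]
        refine ⟨hq'path, ?_⟩
        rw [hq'edges]
        intro hin
        exact hq_notM _ hin hmem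
      apply hcyc v (SimpleGraph.Walk.cons hvw q') hcycle
      rw [SimpleGraph.Walk.edges_cons, List.countP_cons]
      have : q'.edges.countP (fun e => decide (e ∈ M)) = 0 := by
        rw [List.countP_eq_zero]
        intro e he
        simpa using hq_notM e (hq'edges ▸ he)
      simp [this, hmem]
    · intro hne
      by_contra hnm
      apply hne
      apply key.mpr
      have hadj : G'.Adj v w := by
        rw [hG', SimpleGraph.deleteEdges_adj]
        exact ⟨hvw, hnm⟩
      exact hadj.reachable
end

section
/- Let k ≥ 3 be odd and consider the spoke variables y_i = x_{u v_i} ∈ {0,1} and rim variables z_i = x_{v_i v_{i+1}} ∈ {0,1} (indices mod k) of a labeling arising from a multicut of the k-wheel. Then ∑_i z_i − ∑_i y_i ≤ ⌊k/2⌋. Moreover this can be deduced from the triangle constraints alone: each triangle (u,v_i,v_{i+1}) forbids exactly one of {y_i, y_{i+1}, z_i} being 1. -/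
/-- for odd `k ≥ 3`, any spoke labels `y` and rim labels `z`
satisfying all triangle constraints (no triangle cuts exactly one of its edges)
satisfy the odd wheel inequality `∑ z - ∑ y ≤ ⌊k/2⌋ = (k-1)/2`. -/
theorem odd_wheel_from_triangles (k : ℕ) [NeZero k] (hk : Odd k) (hk3 : 3 ≤ k)
    (y z : ZMod k → Bool)
    (htri : ∀ i : ZMod k,
      ((if y i then 1 else 0) + (if y (i + 1) then 1 else 0) +
        (if z i then (1 : ℕ) else 0)) ≠ 1) :
    ∑ i : ZMod k, (if z i then (1 : ℤ) else 0) -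
        ∑ i : ZMod k, (if y i then (1 : ℤ) else 0) ≤ (((k - 1) / 2 : ℕ) : ℤ) := by
  have key : ∀ i : ZMod k, 2 * (if z i then (1:ℤ) else 0) ≤
      (if y i then (1:ℤ) else 0) + (if y (i+1) then (1:ℤ) else 0) + 1 := by
    intro i
    have h := htri i
    rcases Bool.eq_false_or_eq_true (y i) with h1 | h1 <;>
    rcases Bool.eq_false_or_eq_true (y (i+1)) with h2 | h2 <;>
    rcases Bool.eq_false_or_eq_true (z i) with h3 | h3 <;>
    simp [h1, h2, h3] at h ⊢
  have hsum := Finset.sum_le_sum (fun i (_ : i ∈ Finset.univ) => key i)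
  have hshift : ∑ i : ZMod k, (if y (i+1) then (1:ℤ) else 0)
      = ∑ i : ZMod k, (if y i then (1:ℤ) else 0) :=
    Fintype.sum_equiv (Equiv.addRight 1) _ _ (fun i => rfl)
  rw [Finset.sum_add_distrib, Finset.sum_add_distrib, hshift, ← Finset.mul_sum,
    Finset.sum_const, Finset.card_univ, ZMod.card, nsmul_eq_mul, mul_one] at hsum
  obtain ⟨m, hm⟩ := hk
  omega
end
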